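/- arXiv:math/0409577 — 2 statements merged into one kernel-verified Lean document; each statement's English description precedes it below -/
import Mathlib

section
/- For f_II(ξ,t) = (ξ + t, t²ξ), the critical value set (the image of the critical set under f_II) is exactly the union of the x-axis {(x,0) : x ∈ ℝ} and the curve {(x, 4x³/27) : x ∈ ℝ}. Moreover the function h(x) = 4x³/27 describing the second branch satisfies h(0) = h'(0) = h''(0) = 0 and h'''(0) ≠ 0, so the two envelope branches have a self-tangency of order exactly 2 at the origin. -/
/-!
The Jacobian of `f_II` at `(ξ, t)` has rows `(1, 1)` and `(t², 2tξ)`, so it is singular exactly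
when `t² = 2tξ`, i.e. on the lines `t = 0` and `t = 2ξ`. The first is mapped onto the x-axis,
the second to `(3ξ, 4ξ³)`, which is the cubic `y = 4x³/27`; its third derivative `8/9` is the
first one not vanishing at the origin.
-/

/-- The type II normal form `f_II(ξ,t) = (ξ + t, t²ξ)`. -/
def fII : ℝ × ℝ → ℝ × ℝ := fun p => (p.1 + p.2, p.2 ^ 2 * p.1)

theorem surjective_add_linearCombination_iff {𝕜 : Type*} [Field 𝕜] (a b : 𝕜) :
    Function.Surjective (fun v : 𝕜 × 𝕜 => (v.1 + v.2, a * v.1 + b * v.2)) ↔ a ≠ b := by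
  constructor
  · rintro hsurj rfl
    obtain ⟨v, hv⟩ := hsurj (0, 1)
    simp only [Prod.mk.injEq] at hv
    have hone : a * (v.1 + v.2) = 1 := by rw [← hv.2]; ring
    simp [hv.1] at hone
  · intro hab q
    have hba : b - a ≠ 0 := sub_ne_zero.2 hab.symm
    refine ⟨(q.1 - (q.2 - a * q.1) / (b - a), (q.2 - a * q.1) / (b - a)), ?_⟩
    ext
    · ring
    · field_simp; ring

theorem fderiv_fII_apply (p v : ℝ × ℝ) :
    fderiv ℝ fII p v = (v.1 + v.2, p.2 ^ 2 * v.1 + 2 * p.2 * p.1 * v.2) := by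
  have h : HasFDerivAt fII _ p := (hasFDerivAt_fst.add hasFDerivAt_snd).prodMk
    (((hasFDerivAt_snd (p := p)).pow 2).mul (hasFDerivAt_fst (𝕜 := ℝ)))
  rw [h.fderiv]
  simp only [Nat.add_one_sub_one, pow_one, nsmul_eq_mul, Nat.cast_ofNat,
    ContinuousLinearMap.prod_apply, add_apply, ContinuousLinearMap.coe_fst',
    ContinuousLinearMap.coe_snd', smul_apply, smul_eq_mul, Prod.mk.injEq,
    add_right_inj, true_and]
  ring

theorem setOf_not_surjective_fderiv_fII :
    {p : ℝ × ℝ | ¬ Function.Surjective ⇑(fderiv ℝ fII p)} = {p | p.2 = 0 ∨ p.2 = 2 * p.1} := by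
  ext p
  have hD : ⇑(fderiv ℝ fII p) = fun v => (v.1 + v.2, p.2 ^ 2 * v.1 + 2 * p.2 * p.1 * v.2) :=
    funext (fderiv_fII_apply p)
  simp only [Set.mem_ofPred_eq, hD, surjective_add_linearCombination_iff, not_not]
  constructor
  · intro h
    have hfactor : p.2 * (p.2 - 2 * p.1) = 0 := by linear_combination h
    rcases mul_eq_zero.1 hfactor with h0 | h2
    · exact .inl h0
    · exact .inr (by linarith)
  · rintro (h | h) <;> rw [h] <;> ring

theorem image_fII_setOf_snd_eq_zero : fII '' {p | p.2 = 0} = {q | q.2 = 0} := by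
  ext ⟨x, y⟩
  simp [fII, eq_comm]

theorem image_fII_setOf_snd_eq_two_mul_fst :
    fII '' {p | p.2 = 2 * p.1} = {q | q.2 = 4 * q.1 ^ 3 / 27} := by
  ext ⟨x, y⟩
  simp only [fII, Set.mem_image, Set.mem_ofPred_eq, Prod.mk.injEq, Prod.exists, exists_eq_left]
  constructor
  · rintro ⟨ξ, rfl, rfl⟩
    ring
  · intro hy
    exact ⟨x / 3, by ring, by rw [hy]; ring⟩

/-- The critical value set of `f_II` is the union of the x-axis and the
curve `y = 4x³/27`; furthermore `h(x) = 4x³/27` has vanishing value, first and second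
derivatives at `0` and nonzero third derivative, so the two envelope branches have a
self-tangency of order exactly 2 at the origin. -/
theorem fII_envelope_self_tangency :
    (fII '' {p : ℝ × ℝ | ¬ Function.Surjective ⇑(fderiv ℝ fII p)} =
      {q : ℝ × ℝ | q.2 = 0} ∪ {q : ℝ × ℝ | q.2 = 4 * q.1 ^ 3 / 27}) ∧
    (fun x : ℝ => 4 * x ^ 3 / 27) 0 = 0 ∧
    deriv (fun x : ℝ => 4 * x ^ 3 / 27) 0 = 0 ∧
    deriv (deriv (fun x : ℝ => 4 * x ^ 3 / 27)) 0 = 0 ∧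
    deriv (deriv (deriv (fun x : ℝ => 4 * x ^ 3 / 27))) 0 ≠ 0 := by
  have hd1 : deriv (fun x : ℝ => 4 * x ^ 3 / 27) = fun x => 4 * x ^ 2 / 9 := by
    funext x; rw [deriv_div_const, deriv_const_mul_field, deriv_pow_field]; push_cast; ring
  have hd2 : deriv (fun x : ℝ => 4 * x ^ 2 / 9) = fun x => 8 * x / 9 := by
    funext x; rw [deriv_div_const, deriv_const_mul_field, deriv_pow_field]; push_cast; ring
  have hd3 : deriv (fun x : ℝ => 8 * x / 9) = fun _ => 8 / 9 := by
    funext x; rw [deriv_div_const, deriv_const_mul_field, deriv_id'', mul_one]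
  refine ⟨?_, by norm_num, ?_⟩
  · rw [setOf_not_surjective_fderiv_fII, Set.ofPred_or, Set.image_union,
      image_fII_setOf_snd_eq_zero, image_fII_setOf_snd_eq_two_mul_fst]
  · simp only [hd1, hd2, hd3]
    norm_num
end

section
/- Let a ∈ ℝ with a < 1/3 and a ≠ 0, let c± = (−1 ± √(1 − 3a))/3 and m± = c±³ + c±² + a·c±, and let p_a(ξ,t) = (ξ, t³ + t²ξ + atξ²). Then the critical value set of p_a is exactly {(x, m₊·x³) : x ∈ ℝ} ∪ {(x, m₋·x³) : x ∈ ℝ}. In particular both envelope branches are graphs of cubic functions whose 2-jets at the origin vanish, so the two branches are tangent to the x-axis at the origin with tangency of order at least 2. -/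
/-- The projected normal form `p_a(ξ,t) = (ξ, t³ + t²ξ + atξ²)`. -/
def projForm (a : ℝ) : ℝ × ℝ → ℝ × ℝ :=
  fun p => (p.1, p.2 ^ 3 + p.2 ^ 2 * p.1 + a * p.2 * p.1 ^ 2)

/-- The slope `c₊ = (−1 + √(1−3a))/3` of the first criminant line. -/
noncomputable def cPlus (a : ℝ) : ℝ := (-1 + Real.sqrt (1 - 3 * a)) / 3

/-- The slope `c₋ = (−1 − √(1−3a))/3` of the second criminant line. -/
noncomputable def cMinus (a : ℝ) : ℝ := (-1 - Real.sqrt (1 - 3 * a)) / 3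

/-- The cubic coefficient `m± = c±³ + c±² + a·c±` of an envelope branch. -/
noncomputable def mPlus (a : ℝ) : ℝ := cPlus a ^ 3 + cPlus a ^ 2 + a * cPlus a

noncomputable def mMinus (a : ℝ) : ℝ := cMinus a ^ 3 + cMinus a ^ 2 + a * cMinus a

/-!
Since `p_a` preserves the first coordinate, its differential at `(ξ, t)` is a shear and fails to
be onto exactly when `∂_t (t³ + t²ξ + atξ²) = 3t² + 2tξ + aξ² = 3(t − c₊ξ)(t − c₋ξ)` vanishes.
On the line `t = cξ` the map is `ξ ↦ (ξ, (c³ + c² + ac) ξ³)`, which gives the two cubic branches.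
-/

open Set

theorem surjective_shear_iff {𝕜 : Type*} [Field 𝕜] (A B : 𝕜) :
    Function.Surjective (fun v : 𝕜 × 𝕜 => (v.1, A * v.1 + B * v.2)) ↔ B ≠ 0 := by
  constructor
  · rintro hsurj rfl
    obtain ⟨v, hv⟩ := hsurj (0, 1)
    have hv₁ : v.1 = 0 := congrArg Prod.fst hv
    have hv₂ : A * v.1 + 0 * v.2 = 1 := congrArg Prod.snd hv
    simp [hv₁] at hv₂
  · intro hB q
    refine ⟨(q.1, (q.2 - A * q.1) / B), Prod.ext rfl ?_⟩
    field_simp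
    ring

theorem fderiv_projForm_apply (a : ℝ) (p v : ℝ × ℝ) :
    fderiv ℝ (projForm a) p v =
      (v.1, (p.2 ^ 2 + 2 * a * p.2 * p.1) * v.1 +
        (3 * p.2 ^ 2 + 2 * p.2 * p.1 + a * p.1 ^ 2) * v.2) := by
  have hfst : HasFDerivAt (fun q : ℝ × ℝ => q.1) (ContinuousLinearMap.fst ℝ ℝ ℝ) p :=
    hasFDerivAt_fst
  have hsnd : HasFDerivAt (fun q : ℝ × ℝ => q.2) (ContinuousLinearMap.snd ℝ ℝ ℝ) p :=
    hasFDerivAt_snd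
  have hcubic := (((hsnd.pow 3).add ((hsnd.pow 2).mul hfst)).add
    ((hsnd.const_mul a).mul (hfst.pow 2)))
  have hproj : HasFDerivAt (projForm a) _ p := hfst.prodMk hcubic
  rw [hproj.fderiv]
  simp only [ContinuousLinearMap.prod_apply, add_apply, smul_apply,
    ContinuousLinearMap.coe_fst', ContinuousLinearMap.coe_snd', smul_eq_mul]
  refine Prod.ext rfl ?_
  push_cast
  ring

theorem quadratic_eq_mul_sub_cPlus_mul_sub_cMinus {a : ℝ} (ha : a ≤ 1 / 3) (ξ t : ℝ) :
    3 * t ^ 2 + 2 * t * ξ + a * ξ ^ 2 = 3 * (t - cPlus a * ξ) * (t - cMinus a * ξ) := by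
  have hsqrt : Real.sqrt (1 - 3 * a) ^ 2 = 1 - 3 * a := Real.sq_sqrt (by linarith)
  unfold cPlus cMinus
  linear_combination (ξ ^ 2 / 3) * hsqrt

theorem setOf_not_surjective_fderiv_projForm {a : ℝ} (ha : a ≤ 1 / 3) :
    {p : ℝ × ℝ | ¬ Function.Surjective ⇑(fderiv ℝ (projForm a) p)} =
      {p | p.2 = cPlus a * p.1} ∪ {p | p.2 = cMinus a * p.1} := by
  ext p
  have hshear : ⇑(fderiv ℝ (projForm a) p) = fun v : ℝ × ℝ =>
      (v.1, (p.2 ^ 2 + 2 * a * p.2 * p.1) * v.1 +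
        (3 * p.2 ^ 2 + 2 * p.2 * p.1 + a * p.1 ^ 2) * v.2) :=
    funext (fderiv_projForm_apply a p)
  simp only [mem_ofPred_eq, mem_union, hshear, surjective_shear_iff, not_ne_iff,
    quadratic_eq_mul_sub_cPlus_mul_sub_cMinus ha, mul_eq_zero, sub_eq_zero]
  norm_num

theorem projForm_image_line (a c : ℝ) :
    projForm a '' {p | p.2 = c * p.1} =
      {q | ∃ x : ℝ, q = (x, (c ^ 3 + c ^ 2 + a * c) * x ^ 3)} := by
  ext q
  constructor
  · rintro ⟨⟨x, t⟩, rfl : t = c * x, rfl⟩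
    exact ⟨x, Prod.ext rfl (by simp only [projForm]; ring)⟩
  · rintro ⟨x, rfl⟩
    exact ⟨(x, c * x), rfl, Prod.ext rfl (by simp only [projForm]; ring)⟩

theorem cubic_twoJet_eq_zero (m : ℝ) :
    (fun x : ℝ => m * x ^ 3) 0 = 0 ∧
      deriv (fun x : ℝ => m * x ^ 3) 0 = 0 ∧
      deriv (deriv (fun x : ℝ => m * x ^ 3)) 0 = 0 := by
  have hderiv : deriv (fun x : ℝ => m * x ^ 3) = fun x => 3 * m * x ^ 2 := by
    funext x
    simp only [deriv_const_mul_field', deriv_pow_field]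
    ring
  exact ⟨by simp, by simp, by simp [hderiv]⟩

theorem projForm_envelope_general (a : ℝ) (ha1 : a < 1 / 3) :
    (projForm a '' {p : ℝ × ℝ | ¬ Function.Surjective ⇑(fderiv ℝ (projForm a) p)} =
      {q : ℝ × ℝ | ∃ x : ℝ, q = (x, mPlus a * x ^ 3)} ∪
      {q : ℝ × ℝ | ∃ x : ℝ, q = (x, mMinus a * x ^ 3)}) ∧
    (∀ m ∈ ({mPlus a, mMinus a} : Set ℝ),
      (fun x : ℝ => m * x ^ 3) 0 = 0 ∧
      deriv (fun x : ℝ => m * x ^ 3) 0 = 0 ∧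
      deriv (deriv (fun x : ℝ => m * x ^ 3)) 0 = 0) := by
  refine ⟨?_, fun m _ => cubic_twoJet_eq_zero m⟩
  rw [setOf_not_surjective_fderiv_projForm ha1.le, image_union, projForm_image_line,
    projForm_image_line]
  rfl

/-- For `a < 1/3`, `a ≠ 0`, the critical value set of `p_a` is exactly
the union of the two cubic graphs `y = m₊x³` and `y = m₋x³`; each branch is the graph
of a cubic whose 2-jet at the origin vanishes, so the two branches are tangent to the
x-axis at the origin with tangency of order at least 2. -/
theorem projForm_envelope (a : ℝ) (ha1 : a < 1 / 3) (ha0 : a ≠ 0) :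
    (projForm a '' {p : ℝ × ℝ | ¬ Function.Surjective ⇑(fderiv ℝ (projForm a) p)} =
      {q : ℝ × ℝ | ∃ x : ℝ, q = (x, mPlus a * x ^ 3)} ∪
      {q : ℝ × ℝ | ∃ x : ℝ, q = (x, mMinus a * x ^ 3)}) ∧
    (∀ m ∈ ({mPlus a, mMinus a} : Set ℝ),
      (fun x : ℝ => m * x ^ 3) 0 = 0 ∧
      deriv (fun x : ℝ => m * x ^ 3) 0 = 0 ∧
      deriv (deriv (fun x : ℝ => m * x ^ 3)) 0 = 0) :=
  projForm_envelope_general a ha1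
end
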